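/- For θ ≠ 0 and σ > 0, the function R₁(v) = (v²/σ²)·₂F₂(1,1;3/2,2;(θ/σ²)v²) satisfies the ODE (σ²/2)R₁''(v) − θ v R₁'(v) = 1 on ℝ, with R₁(0) = 0. -/

import Mathlib

/-- Pochhammer symbol (a)ₙ = a(a+1)⋯(a+n-1). -/
noncomputable def poch (a : ℝ) (n : ℕ) : ℝ := ∏ i ∈ Finset.range n, (a + (i:ℝ))

/-- The generalized hypergeometric function ₂F₂(1,1;3/2,2;z). -/
noncomputable def F22 (z : ℝ) : ℝ :=
  ∑' n : ℕ, (poch 1 n * poch 1 n) / (poch (3/2) n * poch 2 n) * z^n / (n.factorial : ℝ)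

/-- R₁(v) = (v²/σ²)·₂F₂(1,1;3/2,2;(θ/σ²)v²). -/
noncomputable def R1 (θ σ : ℝ) (v : ℝ) : ℝ := v^2 / σ^2 * F22 (θ / σ^2 * v^2)

open FormalMultilinearSeries Filter

lemma poch_succ (a : ℝ) (n : ℕ) : poch a (n+1) = poch a n * (a + n) :=
  Finset.prod_range_succ _ _

lemma poch_pos {a : ℝ} (ha : 0 < a) (n : ℕ) : 0 < poch a n :=
  Finset.prod_pos fun i _ => by positivity

/-- coefficients of F22 -/
noncomputable def aa (n : ℕ) : ℝ :=
  poch 1 n * poch 1 n / (poch (3/2) n * poch 2 n * n.factorial)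

lemma aa_pos (n : ℕ) : 0 < aa n := by
  have h1 := poch_pos (by norm_num : (0:ℝ) < 1) n
  have h2 := poch_pos (by norm_num : (0:ℝ) < 3/2) n
  have h3 := poch_pos (by norm_num : (0:ℝ) < 2) n
  have h4 : (0:ℝ) < n.factorial := by exact_mod_cast n.factorial_pos
  unfold aa; positivity

lemma aa_ne (n : ℕ) : aa n ≠ 0 := (aa_pos n).ne'

lemma aa_zero : aa 0 = 1 := by simp [aa, poch]

lemma aa_rec (n : ℕ) :
    aa (n+1) * (((n:ℝ)+3/2) * ((n:ℝ)+2)) = aa n * ((n:ℝ)+1) := by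
  have h2 := (poch_pos (by norm_num : (0:ℝ) < 3/2) n).ne'
  have h3 := (poch_pos (by norm_num : (0:ℝ) < 2) n).ne'
  have h4 : ((n.factorial : ℝ)) ≠ 0 := by exact_mod_cast n.factorial_ne_zero
  have e1 : ((n:ℝ)+3/2) ≠ 0 := by positivity
  have e2 : ((n:ℝ)+2) ≠ 0 := by positivity
  have e3 : ((n:ℝ)+1) ≠ 0 := by positivity
  unfold aa
  rw [poch_succ, poch_succ, poch_succ, Nat.factorial_succ]
  push_cast
  field_simp
  ring

lemma aa_ratio (n : ℕ) : aa (n+1) / aa n = ((n:ℝ)+1) / (((n:ℝ)+3/2) * ((n:ℝ)+2)) := by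
  have e1 : ((n:ℝ)+3/2) ≠ 0 := by positivity
  have e2 : ((n:ℝ)+2) ≠ 0 := by positivity
  rw [div_eq_div_iff (aa_ne n) (by positivity)]
  linear_combination aa_rec n

lemma tendsto_ratio_aa :
    Tendsto (fun n : ℕ => ‖aa (n+1)‖ / ‖aa n‖) atTop (nhds 0) := by
  apply squeeze_zero (fun n => by positivity)
    (g := fun n : ℕ => 1 / ((n:ℝ)+1))
  · intro n
    have hn1 : (0:ℝ) < (n:ℝ)+1 := by positivity
    rw [Real.norm_eq_abs, Real.norm_eq_abs, abs_of_pos (aa_pos _), abs_of_pos (aa_pos _),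
      aa_ratio]
    rw [div_le_div_iff₀ (by positivity) hn1]
    nlinarith [Nat.cast_nonneg (α := ℝ) n]
  · exact tendsto_one_div_add_atTop_nhds_zero_nat

/-- shifting coefficients preserves ratio → 0 -/
lemma tendsto_ratio_shift (c : ℕ → ℝ) (hne : ∀ n, c n ≠ 0)
    (h : Tendsto (fun n : ℕ => ‖c (n+1)‖ / ‖c n‖) atTop (nhds 0)) :
    Tendsto (fun n : ℕ => ‖((n:ℝ)+1+1) * c (n+1+1)‖ / ‖((n:ℝ)+1) * c (n+1)‖) atTop (nhds 0) := by
  have h1 : Tendsto (fun n : ℕ => ‖c (n+1+1)‖ / ‖c (n+1)‖) atTop (nhds 0) :=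
    h.comp (tendsto_add_atTop_nat 1)
  have h2 : Tendsto (fun n : ℕ => ((n:ℝ)+2) / ((n:ℝ)+1)) atTop (nhds 1) := by
    have h0 : Tendsto (fun n : ℕ => 1 / ((n:ℝ)+1)) atTop (nhds 0) :=
      tendsto_one_div_add_atTop_nhds_zero_nat
    have h3 := (tendsto_const_nhds (x := (1:ℝ)) (f := atTop (α := ℕ))).add h0
    rw [add_zero] at h3
    refine h3.congr fun n => ?_
    have : ((n:ℝ)+1) ≠ 0 := by positivity
    field_simp
    ring
  have := h2.mul h1
  rw [one_mul] at this
  refine this.congr fun n => ?_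
  have hp1 : (0:ℝ) < (n:ℝ)+1 := by positivity
  have hp2 : (0:ℝ) < (n:ℝ)+2 := by positivity
  rw [norm_mul, norm_mul, Real.norm_eq_abs ((n:ℝ)+1+1), Real.norm_eq_abs ((n:ℝ)+1),
    abs_of_pos (by linarith), abs_of_pos hp1]
  rw [mul_div_mul_comm]
  ring_nf

lemma radius_aa : (ofScalars ℝ aa).radius = ⊤ :=
  ofScalars_radius_eq_top_of_tendsto ℝ aa (Eventually.of_forall aa_ne) tendsto_ratio_aa

noncomputable def ab : ℕ → ℝ := fun n => ((n:ℝ)+1) * aa (n+1)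
noncomputable def ac : ℕ → ℝ := fun n => ((n:ℝ)+1) * ab (n+1)

lemma ab_ne (n : ℕ) : ab n ≠ 0 := by
  unfold ab
  exact mul_ne_zero (by positivity) (aa_ne _)

lemma tendsto_ratio_ab :
    Tendsto (fun n : ℕ => ‖ab (n+1)‖ / ‖ab n‖) atTop (nhds 0) := by
  have := tendsto_ratio_shift aa aa_ne tendsto_ratio_aa
  refine this.congr fun n => ?_
  unfold ab
  push_cast
  norm_num

lemma radius_ab : (ofScalars ℝ ab).radius = ⊤ :=
  ofScalars_radius_eq_top_of_tendsto ℝ ab (Eventually.of_forall ab_ne) tendsto_ratio_ab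

lemma ac_ne (n : ℕ) : ac n ≠ 0 := by
  unfold ac
  exact mul_ne_zero (by positivity) (ab_ne _)

lemma tendsto_ratio_ac :
    Tendsto (fun n : ℕ => ‖ac (n+1)‖ / ‖ac n‖) atTop (nhds 0) := by
  have := tendsto_ratio_shift ab ab_ne tendsto_ratio_ab
  refine this.congr fun n => ?_
  unfold ac
  push_cast
  norm_num

lemma radius_ac : (ofScalars ℝ ac).radius = ⊤ :=
  ofScalars_radius_eq_top_of_tendsto ℝ ac (Eventually.of_forall ac_ne) tendsto_ratio_ac
noncomputable def sfun (c : ℕ → ℝ) : ℝ → ℝ := fun z => ∑' n : ℕ, c n * z ^ n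

lemma sfun_eq_sum (c : ℕ → ℝ) (hr : (ofScalars ℝ c).radius = ⊤) :
    sfun c = (ofScalars ℝ c).sum := by
  funext x
  rw [sfun]
  have := ofScalars_sum_eq c x
  rw [ofScalarsSum] at this
  rw [this]
  exact tsum_congr fun n => by rw [smul_eq_mul]

lemma mem_top_ball (y : ℝ) : y ∈ Metric.eball (0:ℝ) ⊤ := by
  simp [Metric.mem_eball, edist_lt_top]

lemma sfun_hasSum (c : ℕ → ℝ) (hr : (ofScalars ℝ c).radius = ⊤) (z : ℝ) :
    HasSum (fun n => c n * z ^ n) (sfun c z) := by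
  have h := (ofScalars ℝ c).hasSum (x := z) (by rw [hr]; exact mem_top_ball z)
  rw [sfun_eq_sum c hr]
  refine h.congr_fun fun n => ?_
  rw [ofScalars_apply_eq, smul_eq_mul]

lemma sfun_hasDerivAt (c : ℕ → ℝ) (hr : (ofScalars ℝ c).radius = ⊤) (y : ℝ) :
    HasDerivAt (sfun c) (sfun (fun n => ((n:ℝ)+1) * c (n+1)) y) y := by
  set p := ofScalars ℝ c with hp
  have H : HasFPowerSeriesOnBall p.sum p 0 ⊤ := by
    have := p.hasFPowerSeriesOnBall (by rw [hr]; exact ENNReal.zero_lt_top)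
    rwa [hr] at this
  have hdiff : DifferentiableAt ℝ p.sum y :=
    (H.analyticAt_of_mem (by simp [EMetric.mem_ball, edist_lt_top])).differentiableAt
  have Hd : HasFPowerSeriesOnBall (fderiv ℝ p.sum) p.derivSeries 0 ⊤ := H.fderiv
  have hs : HasSum (fun n => p.derivSeries n (fun _ => y)) (fderiv ℝ p.sum (0 + y)) :=
    Hd.hasSum (mem_top_ball y)
  -- evaluate at y
  have hs2 : HasSum (fun n => p.derivSeries n (fun _ => y) y) (fderiv ℝ p.sum (0 + y) y) := by
    exact hs.mapL (ContinuousLinearMap.apply ℝ ℝ y)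
  have hterm : ∀ n, p.derivSeries n (fun _ => y) y = (((n:ℝ)+1) * c (n+1) * y ^ n) * y := by
    intro n
    rw [derivSeries_apply_diag]
    rw [hp, ofScalars_apply_eq]
    rw [nsmul_eq_mul, smul_eq_mul]
    push_cast
    ring
  have hder : fderiv ℝ p.sum (0 + y) y = (deriv p.sum y) * y := by
    rw [zero_add]
    rw [← hdiff.hasDerivAt.deriv]
    have : fderiv ℝ p.sum y y = y • fderiv ℝ p.sum y 1 := by
      rw [← ContinuousLinearMap.map_smul, smul_eq_mul, mul_one]
    rw [this, hdiff.hasDerivAt.deriv]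
    simp [fderiv_apply_one_eq_deriv, mul_comm]
  rw [hder] at hs2
  have hs3 : HasSum (fun n : ℕ => (((n:ℝ)+1) * c (n+1) * y ^ n) * y) (deriv p.sum y * y) :=
    hs2.congr_fun fun n : ℕ => (hterm n).symm
  have key : sfun (fun n => ((n:ℝ)+1) * c (n+1)) y = deriv p.sum y := by
    rcases eq_or_ne y 0 with rfl | hy
    · have h0 : sfun (fun n => ((n:ℝ)+1) * c (n+1)) 0 = c 1 := by
        rw [sfun, tsum_eq_single 0 (fun n hn => by
          rcases Nat.exists_eq_succ_of_ne_zero hn with ⟨m, rfl⟩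
          simp [pow_succ])]
        simp
      have h1 : deriv p.sum 0 = c 1 := by
        rw [H.hasFPowerSeriesAt.deriv, hp, ofScalars_apply_eq]
        simp
      rw [h0, h1]
    · have hs4 := hs3.div_const y
      have : deriv p.sum y * y / y = deriv p.sum y := by field_simp
      rw [this] at hs4
      have hs5 : HasSum (fun n : ℕ => ((n:ℝ)+1) * c (n+1) * y ^ n) (deriv p.sum y) :=
        hs4.congr_fun fun n : ℕ => by field_simp
      rw [sfun]
      exact hs5.tsum_eq
  rw [sfun_eq_sum c hr, key]
  exact hdiff.hasDerivAt

/-- prepend a zero -/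
def shift1 (v : ℕ → ℝ) : ℕ → ℝ := fun m => match m with | 0 => 0 | m+1 => v m

lemma hasSum_shift1 {v : ℕ → ℝ} {S : ℝ} (h : HasSum v S) : HasSum (shift1 v) S := by
  have h' : HasSum (fun n => shift1 v (n+1)) S := h
  have := (hasSum_nat_add_iff (f := shift1 v) 1).mp h'
  simpa [shift1] using this

lemma key_id (z : ℝ) :
    (1 - 2*z) * sfun aa z + (5*z - 2*z^2) * sfun ab z + 2*z^2 * sfun ac z = 1 := by
  have Sf := sfun_hasSum aa radius_aa z
  have Sg := sfun_hasSum ab radius_ab z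
  have Sh := sfun_hasSum ac radius_ac z
  have hB : HasSum (shift1 (fun n => aa n * z^(n+1))) (z * sfun aa z) :=
    hasSum_shift1 ((Sf.mul_left z).congr_fun fun n : ℕ => by ring)
  have hC : HasSum (shift1 (fun n => ab n * z^(n+1))) (z * sfun ab z) :=
    hasSum_shift1 ((Sg.mul_left z).congr_fun fun n : ℕ => by ring)
  have hD : HasSum (shift1 (shift1 (fun n => ab n * z^(n+2)))) (z^2 * sfun ab z) :=
    hasSum_shift1 (hasSum_shift1 ((Sg.mul_left (z^2)).congr_fun fun n : ℕ => by ring))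
  have hE : HasSum (shift1 (shift1 (fun n => ac n * z^(n+2)))) (z^2 * sfun ac z) :=
    hasSum_shift1 (hasSum_shift1 ((Sh.mul_left (z^2)).congr_fun fun n : ℕ => by ring))
  have htot := (((Sf.sub (hB.mul_left 2)).add (hC.mul_left 5)).sub (hD.mul_left 2)).add
    (hE.mul_left 2)
  have hone : HasSum (fun m : ℕ => if m = 0 then (1:ℝ) else 0) 1 := by
    simpa using hasSum_ite_eq (0 : ℕ) (1:ℝ)
  have hfun : (fun m : ℕ => aa m * z^m - 2 * shift1 (fun n => aa n * z^(n+1)) m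
      + 5 * shift1 (fun n => ab n * z^(n+1)) m
      - 2 * shift1 (shift1 (fun n => ab n * z^(n+2))) m
      + 2 * shift1 (shift1 (fun n => ac n * z^(n+2))) m)
      = fun m : ℕ => if m = 0 then (1:ℝ) else 0 := by
    funext m
    match m with
    | 0 => simp [shift1, aa_zero]
    | 1 =>
      have h0 := aa_rec 0
      push_cast at h0
      simp only [shift1, ab]
      push_cast
      norm_num
      linear_combination (2 : ℝ) * z * h0
    | (m+2) =>
      have h0 := aa_rec (m+1)
      push_cast at h0
      simp only [shift1, ab, ac]
      push_cast
      have hne2 : (m:ℕ) + 2 ≠ 0 := by omega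
      linear_combination (2 : ℝ) * z^(m+2) * h0
  rw [hfun] at htot
  have := htot.unique hone
  linear_combination this

lemma F22_eq_sfun : F22 = sfun aa := by
  funext z
  rw [F22, sfun]
  exact tsum_congr fun n => by rw [aa]; ring

lemma hasDerivAt_F (z : ℝ) : HasDerivAt (sfun aa) (sfun ab z) z :=
  sfun_hasDerivAt aa radius_aa z

lemma hasDerivAt_G (z : ℝ) : HasDerivAt (sfun ab) (sfun ac z) z :=
  sfun_hasDerivAt ab radius_ab z

lemma final_alg (θ σ v F G H : ℝ) (hσ2 : σ^2 ≠ 0)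
    (hid : (1 - 2*(θ/σ^2*v^2)) * F + (5*(θ/σ^2*v^2) - 2*(θ/σ^2*v^2)^2) * G
      + 2*(θ/σ^2*v^2)^2 * H = 1) :
    σ^2/2 * (2/σ^2 * F + 10*(θ/σ^2)*v^2/σ^2 * G + 4*(θ/σ^2)^2*v^4/σ^2 * H)
      - θ*v*(2*v/σ^2 * F + 2*(θ/σ^2)*v^3/σ^2 * G) = 1 := by
  have hσ : σ ≠ 0 := by rintro rfl; simp at hσ2
  rw [← hid]
  field_simp
  ring

/-- For θ ≠ 0 and σ > 0, R₁ solves (σ²/2)R₁''(v) − θvR₁'(v) = 1 on ℝ with R₁(0) = 0. -/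
theorem R1_solves_ODE (θ σ : ℝ) (hθ : θ ≠ 0) (hσ : 0 < σ) :
    (∀ v : ℝ, σ^2 / 2 * deriv (deriv (R1 θ σ)) v - θ * v * deriv (R1 θ σ) v = 1) ∧
    R1 θ σ 0 = 0 := by
  have hσ2 : (σ:ℝ)^2 ≠ 0 := by positivity
  set D1 : ℝ → ℝ := fun v =>
    2*v/σ^2 * sfun aa (θ/σ^2*v^2) + 2*(θ/σ^2)*v^3/σ^2 * sfun ab (θ/σ^2*v^2) with hD1
  set D2 : ℝ → ℝ := fun v =>
    2/σ^2 * sfun aa (θ/σ^2*v^2) + 10*(θ/σ^2)*v^2/σ^2 * sfun ab (θ/σ^2*v^2)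
      + 4*(θ/σ^2)^2*v^4/σ^2 * sfun ac (θ/σ^2*v^2) with hD2
  have hR1fun : R1 θ σ = fun v => v^2/σ^2 * sfun aa (θ/σ^2*v^2) := by
    funext v
    rw [R1, F22_eq_sfun]
  have hinner : ∀ v : ℝ, HasDerivAt (fun v : ℝ => θ/σ^2*v^2) (θ/σ^2*(2*v^1)) v := fun v =>
    (hasDerivAt_pow 2 v).const_mul (θ/σ^2)
  have hcompF : ∀ v : ℝ, HasDerivAt (fun v : ℝ => sfun aa (θ/σ^2*v^2))
      (sfun ab (θ/σ^2*v^2) * (θ/σ^2*(2*v^1))) v := fun v =>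
    by have := (hasDerivAt_F (θ/σ^2*v^2)).comp v (hinner v); exact this
  have hcompG : ∀ v : ℝ, HasDerivAt (fun v : ℝ => sfun ab (θ/σ^2*v^2))
      (sfun ac (θ/σ^2*v^2) * (θ/σ^2*(2*v^1))) v := fun v =>
    by have := (hasDerivAt_G (θ/σ^2*v^2)).comp v (hinner v); exact this
  have hR1' : ∀ v : ℝ, HasDerivAt (R1 θ σ) (D1 v) v := by
    intro v
    rw [hR1fun]
    have h1 : HasDerivAt (fun v : ℝ => v^2/σ^2) (2*v^1/σ^2) v :=
      (hasDerivAt_pow 2 v).div_const _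
    have := h1.mul (hcompF v)
    refine this.congr_deriv ?_
    rw [hD1]
    ring
  have hD1' : ∀ v : ℝ, HasDerivAt D1 (D2 v) v := by
    intro v
    have h1 : HasDerivAt (fun v : ℝ => 2*v/σ^2) (2*1/σ^2) v :=
      ((hasDerivAt_id v).const_mul (2:ℝ)).div_const _
    have h2 : HasDerivAt (fun v : ℝ => 2*(θ/σ^2)*v^3/σ^2) (2*(θ/σ^2)*(3*v^2)/σ^2) v :=
      ((hasDerivAt_pow 3 v).const_mul (2*(θ/σ^2))).div_const _
    have := (h1.mul (hcompF v)).add (h2.mul (hcompG v))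
    refine this.congr_deriv ?_
    rw [hD2]
    ring
  have hder1 : deriv (R1 θ σ) = D1 := funext fun v => (hR1' v).deriv
  constructor
  · intro v
    rw [hder1, (hD1' v).deriv, hD2, hD1]
    exact final_alg θ σ v _ _ _ hσ2 (key_id (θ/σ^2*v^2))
  · rw [R1]
    simp
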